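/- Compatibility of the strong-constraint reduction with the pairing and the Nijenhuis-type tensor (consistency of the L∞-morphism components): let X_i, ξ_i : ℝ^d → ℝ^d (i = 1,2,3) be smooth, define sections e_i(x,x̃) := (X_i(x), ξ_i(x)) on ℝ^{2d} and generalized sections ê_i := (X_i, ξ_i) on ℝ^d. Then for all (x,x̃): ⟨e₁,e₂⟩(x,x̃) = 2⟨ê₁,ê₂⟩_C(x) and N(e₁,e₂,e₃)(x,x̃) = 2 N_c(ê₁,ê₂,ê₃)(x). -/

import Mathlib

open scoped BigOperators

noncomputable section

/-- The index involution implementing the O(d,d) metric η with matrix [[0,1],[1,0]]: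
η_{AB} = 1 iff B = σd d A. -/
def σd (d : ℕ) (A : Fin (2*d)) : Fin (2*d) :=
  if h : (A : ℕ) < d then ⟨(A : ℕ) + d, by omega⟩
  else ⟨(A : ℕ) - d, by have := A.isLt; omega⟩

/-- A section of the DFT algebroid bundle over ℝ^{2d}. -/
abbrev Sec (d : ℕ) := (Fin (2*d) → ℝ) → Fin (2*d) → ℝ

/-- Partial derivative ∂_A f at x. -/
def pd {n : ℕ} (f : (Fin n → ℝ) → ℝ) (A : Fin n) (x : Fin n → ℝ) : ℝ :=
  fderiv ℝ f x (Pi.single A 1)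

/-- The pairing ⟨e₁,e₂⟩ = η_{AB} e₁^A e₂^B. -/
def pair {d : ℕ} (e₁ e₂ : Sec d) (x : Fin (2*d) → ℝ) : ℝ :=
  ∑ A, e₁ x A * e₂ x (σd d A)

/-- The derivative D : C^∞ → Γ(L), (Df)^A = (1/2) η^{AB} ∂_B f. -/
def Dsec {d : ℕ} (f : (Fin (2*d) → ℝ) → ℝ) : Sec d :=
  fun x A => (1/2) * pd f (σd d A) x

/-- The flat C-bracket of double field theory. -/
def cbr {d : ℕ} (e₁ e₂ : Sec d) : Sec d := fun x B =>
  (∑ A, e₁ x A * pd (fun y => e₂ y B) A x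
    - (1/2) * ∑ A, e₁ x A * pd (fun y => e₂ y (σd d A)) (σd d B) x)
  - (∑ A, e₂ x A * pd (fun y => e₁ y B) A x
    - (1/2) * ∑ A, e₂ x A * pd (fun y => e₁ y (σd d A)) (σd d B) x)

/-- SC_ρ(e₁,e₂)f = (1/2) η^{BC} ∂_B f η_{AD} (e₁^A ∂_C e₂^D − e₂^A ∂_C e₁^D). -/
def SCrho {d : ℕ} (e₁ e₂ : Sec d) (f : (Fin (2*d) → ℝ) → ℝ) (x : Fin (2*d) → ℝ) : ℝ :=
  (1/2) * ∑ B, pd f B x *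
    ∑ A, (e₁ x A * pd (fun y => e₂ y (σd d A)) (σd d B) x
          - e₂ x A * pd (fun y => e₁ y (σd d A)) (σd d B) x)

/-- The Nijenhuis-type tensor N(e₁,e₂,e₃). -/
def Nform {d : ℕ} (e₁ e₂ e₃ : Sec d) (x : Fin (2*d) → ℝ) : ℝ :=
  (1/3) * (pair (cbr e₁ e₂) e₃ x + pair (cbr e₂ e₃) e₁ x + pair (cbr e₃ e₁) e₂ x)

/-- The Jacobiator of the C-bracket. -/
def Jac {d : ℕ} (e₁ e₂ e₃ : Sec d) : Sec d := fun x B =>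
  cbr (cbr e₁ e₂) e₃ x B + cbr (cbr e₂ e₃) e₁ x B + cbr (cbr e₃ e₁) e₂ x B

/-- SC_Jac(e₁,e₂,e₃) = Jac(e₁,e₂,e₃) − D N(e₁,e₂,e₃). -/
def SCJac {d : ℕ} (e₁ e₂ e₃ : Sec d) : Sec d := fun x B =>
  Jac e₁ e₂ e₃ x B - Dsec (Nform e₁ e₂ e₃) x B

/-- Index of the a-th x-coordinate inside ℝ^{2d}. -/
def lo (d : ℕ) (a : Fin d) : Fin (2*d) := ⟨(a : ℕ), by have := a.isLt; omega⟩

/-- Index of the a-th x̃-coordinate inside ℝ^{2d}. -/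
def hi (d : ℕ) (a : Fin d) : Fin (2*d) := ⟨(a : ℕ) + d, by have := a.isLt; omega⟩

/-- The x-part of a point of ℝ^{2d}. -/
def xpart {d : ℕ} (p : Fin (2*d) → ℝ) : Fin d → ℝ := fun a => p (lo d a)

/-- The section e(x,x̃) = (X(x), ξ(x)) of the DFT bundle built from data on ℝ^d. -/
def liftSec {d : ℕ} (X ξ : (Fin d → ℝ) → Fin d → ℝ) : Sec d := fun p A =>
  if h : (A : ℕ) < d then X (xpart p) ⟨(A : ℕ), h⟩
  else ξ (xpart p) ⟨(A : ℕ) - d, by have := A.isLt; omega⟩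

/-- A generalized section (X, ξ) on ℝ^d: a vector field and a 1-form. -/
abbrev GSec (d : ℕ) := ((Fin d → ℝ) → Fin d → ℝ) × ((Fin d → ℝ) → Fin d → ℝ)

/-- The Courant pairing ⟨e₁,e₂⟩_C = (1/2)(X₁^a ξ_{2a} + X₂^a ξ_{1a}). -/
def pairC {d : ℕ} (e₁ e₂ : GSec d) (x : Fin d → ℝ) : ℝ :=
  (1/2) * (∑ a, e₁.1 x a * e₂.2 x a + ∑ a, e₂.1 x a * e₁.2 x a)

/-- D_C f = (0, df). -/
def DC {d : ℕ} (f : (Fin d → ℝ) → ℝ) : GSec d :=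
  (fun _ _ => 0, fun x a => pd f a x)

/-- The Courant bracket on generalized sections of ℝ^d. -/
def courant {d : ℕ} (e₁ e₂ : GSec d) : GSec d :=
  (fun x b => ∑ a, e₁.1 x a * pd (fun y => e₂.1 y b) a x
            - ∑ a, e₂.1 x a * pd (fun y => e₁.1 y b) a x,
   fun x b => ∑ a, e₁.1 x a * pd (fun y => e₂.2 y b) a x
            - ∑ a, e₂.1 x a * pd (fun y => e₁.2 y b) a x
            + ∑ a, e₂.2 x a * pd (fun y => e₁.1 y a) b x
            - ∑ a, e₁.2 x a * pd (fun y => e₂.1 y a) b x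
            - (1/2) * pd (fun y => ∑ a, (e₁.1 y a * e₂.2 y a - e₂.1 y a * e₁.2 y a)) b x)

/-- The Courant Nijenhuis-type tensor N_c(e₁,e₂,e₃). -/
def Nc {d : ℕ} (e₁ e₂ e₃ : GSec d) (x : Fin d → ℝ) : ℝ :=
  (1/3) * (pairC (courant e₁ e₂) e₃ x + pairC (courant e₂ e₃) e₁ x
            + pairC (courant e₃ e₁) e₂ x)

section Aux

variable {d : ℕ}

lemma σd_lo (a : Fin d) : σd d (lo d a) = hi d a := by
  simp [σd, lo, hi, a.isLt]

lemma σd_hi (a : Fin d) : σd d (hi d a) = lo d a := by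
  have h : ¬ ((hi d a : Fin (2*d)) : ℕ) < d := by simp [hi]
  simp only [σd, dif_neg h]
  ext; simp [hi, lo]

lemma liftSec_lo (X ξ : (Fin d → ℝ) → Fin d → ℝ) (p : Fin (2*d) → ℝ) (a : Fin d) :
    liftSec X ξ p (lo d a) = X (xpart p) a := by
  simp [liftSec, lo, a.isLt]

lemma liftSec_hi (X ξ : (Fin d → ℝ) → Fin d → ℝ) (p : Fin (2*d) → ℝ) (a : Fin d) :
    liftSec X ξ p (hi d a) = ξ (xpart p) a := by
  have h : ¬ ((hi d a : Fin (2*d)) : ℕ) < d := by simp [hi]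
  simp only [liftSec, dif_neg h]
  congr 1
  ext; simp [hi]

lemma sum_split (f : Fin (2*d) → ℝ) :
    ∑ A, f A = ∑ a : Fin d, f (lo d a) + ∑ a : Fin d, f (hi d a) := by
  rw [← Equiv.sum_comp (finCongr (two_mul d).symm) f, Fin.sum_univ_add]
  congr 1
  all_goals refine Finset.sum_congr rfl fun a _ => ?_
  all_goals congr 1
  all_goals ext
  all_goals simp [lo, hi, finCongr]

/-- xpart as a continuous linear map. -/
def xpartL (d : ℕ) : ((Fin (2*d) → ℝ)) →L[ℝ] (Fin d → ℝ) :=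
  ContinuousLinearMap.pi fun a => ContinuousLinearMap.proj (lo d a)

lemma xpart_eq (p : Fin (2*d) → ℝ) : xpart p = xpartL d p := rfl

end Aux
section Aux2

variable {d : ℕ}

lemma pd_comp_xpart (g : (Fin d → ℝ) → ℝ) (hg : Differentiable ℝ g)
    (A : Fin (2*d)) (p : Fin (2*d) → ℝ) :
    pd (fun y => g (xpart y)) A p = fderiv ℝ g (xpart p) (xpartL d (Pi.single A 1)) := by
  have h1 : (fun y => g (xpart y)) = g ∘ (xpartL d) := rfl
  unfold pd
  rw [h1, fderiv_comp p (hg _) (xpartL d).differentiableAt, (xpartL d).fderiv]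
  rfl

lemma xpartL_single_lo (a : Fin d) :
    xpartL d (Pi.single (lo d a) 1) = Pi.single a (1:ℝ) := by
  funext c
  simp [xpartL, Pi.single_apply, lo, Fin.ext_iff]

lemma xpartL_single_hi (a : Fin d) :
    xpartL d (Pi.single (hi d a) 1) = 0 := by
  funext c
  have : lo d c ≠ hi d a := by
    simp only [ne_eq, Fin.ext_iff, lo, hi]
    have := c.isLt
    omega
  simp [xpartL, Pi.single_apply, this]

lemma pd_lift_lo (Z : (Fin d → ℝ) → Fin d → ℝ)
    (hZ : ∀ c, Differentiable ℝ (fun y => Z y c)) (c a : Fin d) (p : Fin (2*d) → ℝ) :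
    pd (fun y => Z (xpart y) c) (lo d a) p = pd (fun y => Z y c) a (xpart p) := by
  rw [pd_comp_xpart (fun y => Z y c) (hZ c), xpartL_single_lo]
  rfl

lemma pd_lift_hi (Z : (Fin d → ℝ) → Fin d → ℝ)
    (hZ : ∀ c, Differentiable ℝ (fun y => Z y c)) (c a : Fin d) (p : Fin (2*d) → ℝ) :
    pd (fun y => Z (xpart y) c) (hi d a) p = 0 := by
  rw [pd_comp_xpart (fun y => Z y c) (hZ c), xpartL_single_hi, map_zero]

lemma pd_expand (X₁ ξ₂ X₂ ξ₁ : (Fin d → ℝ) → Fin d → ℝ)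
    (hX₁ : ∀ c, Differentiable ℝ (fun y => X₁ y c))
    (hξ₂ : ∀ c, Differentiable ℝ (fun y => ξ₂ y c))
    (hX₂ : ∀ c, Differentiable ℝ (fun y => X₂ y c))
    (hξ₁ : ∀ c, Differentiable ℝ (fun y => ξ₁ y c))
    (b : Fin d) (x : Fin d → ℝ) :
    pd (fun y => ∑ a, (X₁ y a * ξ₂ y a - X₂ y a * ξ₁ y a)) b x
    = ∑ a, ξ₂ x a * pd (fun y => X₁ y a) b x + ∑ a, X₁ x a * pd (fun y => ξ₂ y a) b x
      - (∑ a, ξ₁ x a * pd (fun y => X₂ y a) b x + ∑ a, X₂ x a * pd (fun y => ξ₁ y a) b x) := by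
  have hterm : ∀ a : Fin d, DifferentiableAt ℝ (fun y => X₁ y a * ξ₂ y a - X₂ y a * ξ₁ y a) x :=
    fun a => (((hX₁ a) x).mul ((hξ₂ a) x)).sub (((hX₂ a) x).mul ((hξ₁ a) x))
  have key : ∀ a : Fin d,
      fderiv ℝ (fun y => X₁ y a * ξ₂ y a - X₂ y a * ξ₁ y a) x (Pi.single b 1)
      = ξ₂ x a * pd (fun y => X₁ y a) b x + X₁ x a * pd (fun y => ξ₂ y a) b x
        - (ξ₁ x a * pd (fun y => X₂ y a) b x + X₂ x a * pd (fun y => ξ₁ y a) b x) := by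
    intro a
    rw [fderiv_fun_sub (((hX₁ a) x).fun_mul ((hξ₂ a) x)) (((hX₂ a) x).fun_mul ((hξ₁ a) x)),
        fderiv_fun_mul ((hX₁ a) x) ((hξ₂ a) x), fderiv_fun_mul ((hX₂ a) x) ((hξ₁ a) x)]
    simp only [ContinuousLinearMap.coe_sub', Pi.sub_apply, ContinuousLinearMap.add_apply,
      ContinuousLinearMap.coe_smul', Pi.smul_apply, smul_eq_mul, pd]
    ring
  unfold pd
  rw [fderiv_fun_sum (fun a _ => hterm a), ContinuousLinearMap.sum_apply,
    Finset.sum_congr rfl (fun a _ => key a), Finset.sum_sub_distrib, Finset.sum_add_distrib,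
    Finset.sum_add_distrib]
  rfl

end Aux2
section Aux3

variable {d : ℕ}

lemma pair_lift (X₁ ξ₁ X₂ ξ₂ : (Fin d → ℝ) → Fin d → ℝ) (p : Fin (2*d) → ℝ) :
    pair (liftSec X₁ ξ₁) (liftSec X₂ ξ₂) p = 2 * pairC (X₁, ξ₁) (X₂, ξ₂) (xpart p) := by
  unfold pair pairC
  rw [sum_split]
  simp only [σd_lo, σd_hi, liftSec_lo, liftSec_hi]
  have h2 : ∑ a, ξ₁ (xpart p) a * X₂ (xpart p) a = ∑ a, X₂ (xpart p) a * ξ₁ (xpart p) a :=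
    Finset.sum_congr rfl fun a _ => mul_comm _ _
  rw [h2]; ring

lemma exists_lo_or_hi (B : Fin (2*d)) : (∃ b, B = lo d b) ∨ (∃ b, B = hi d b) := by
  by_cases h : (B : ℕ) < d
  · exact Or.inl ⟨⟨B, h⟩, by ext; rfl⟩
  · refine Or.inr ⟨⟨(B : ℕ) - d, by have := B.isLt; omega⟩, ?_⟩
    ext; simp [hi]; omega

lemma cbr_lift (X₁ ξ₁ X₂ ξ₂ : (Fin d → ℝ) → Fin d → ℝ)
    (hX₁ : ∀ c, Differentiable ℝ (fun y => X₁ y c))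
    (hξ₁ : ∀ c, Differentiable ℝ (fun y => ξ₁ y c))
    (hX₂ : ∀ c, Differentiable ℝ (fun y => X₂ y c))
    (hξ₂ : ∀ c, Differentiable ℝ (fun y => ξ₂ y c))
    (p : Fin (2*d) → ℝ) (B : Fin (2*d)) :
    cbr (liftSec X₁ ξ₁) (liftSec X₂ ξ₂) p B
    = liftSec (courant (X₁, ξ₁) (X₂, ξ₂)).1 (courant (X₁, ξ₁) (X₂, ξ₂)).2 p B := by
  rcases exists_lo_or_hi B with ⟨b, rfl⟩ | ⟨b, rfl⟩
  · simp only [cbr, courant, liftSec_lo, sum_split, σd_lo, σd_hi, liftSec_hi,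
      pd_lift_lo X₁ hX₁, pd_lift_hi X₁ hX₁, pd_lift_lo ξ₁ hξ₁, pd_lift_hi ξ₁ hξ₁,
      pd_lift_lo X₂ hX₂, pd_lift_hi X₂ hX₂, pd_lift_lo ξ₂ hξ₂, pd_lift_hi ξ₂ hξ₂,
      mul_zero, Finset.sum_const_zero, add_zero, zero_add]
    ring
  · simp only [cbr, courant, liftSec_lo, sum_split, σd_lo, σd_hi, liftSec_hi,
      pd_lift_lo X₁ hX₁, pd_lift_hi X₁ hX₁, pd_lift_lo ξ₁ hξ₁, pd_lift_hi ξ₁ hξ₁,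
      pd_lift_lo X₂ hX₂, pd_lift_hi X₂ hX₂, pd_lift_lo ξ₂ hξ₂, pd_lift_hi ξ₂ hξ₂,
      mul_zero, Finset.sum_const_zero, add_zero, zero_add]
    rw [pd_expand X₁ ξ₂ X₂ ξ₁ hX₁ hξ₂ hX₂ hξ₁ b (xpart p)]
    ring

end Aux3
/-- Compatibility of the strong-constraint reduction with the pairing and N. -/
theorem reduction_pair_and_N {d : ℕ} (hd : 1 ≤ d)
    (X₁ X₂ X₃ ξ₁ ξ₂ ξ₃ : (Fin d → ℝ) → Fin d → ℝ)
    (hX₁ : ContDiff ℝ (⊤ : ℕ∞) X₁) (hX₂ : ContDiff ℝ (⊤ : ℕ∞) X₂) (hX₃ : ContDiff ℝ (⊤ : ℕ∞) X₃)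
    (hξ₁ : ContDiff ℝ (⊤ : ℕ∞) ξ₁) (hξ₂ : ContDiff ℝ (⊤ : ℕ∞) ξ₂) (hξ₃ : ContDiff ℝ (⊤ : ℕ∞) ξ₃) :
    ∀ p : Fin (2*d) → ℝ,
      pair (liftSec X₁ ξ₁) (liftSec X₂ ξ₂) p
        = 2 * pairC (X₁, ξ₁) (X₂, ξ₂) (xpart p) ∧
      Nform (liftSec X₁ ξ₁) (liftSec X₂ ξ₂) (liftSec X₃ ξ₃) p
        = 2 * Nc (X₁, ξ₁) (X₂, ξ₂) (X₃, ξ₃) (xpart p) := by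
  have dc : ∀ Z : (Fin d → ℝ) → Fin d → ℝ, ContDiff ℝ (⊤ : ℕ∞) Z →
      ∀ c, Differentiable ℝ (fun y => Z y c) :=
    fun Z hZ c => (contDiff_pi.mp hZ c).differentiable (by simp)
  intro p
  refine ⟨pair_lift X₁ ξ₁ X₂ ξ₂ p, ?_⟩
  have hp : ∀ (Y₁ η₁ Y₂ η₂ Y₃ η₃ : (Fin d → ℝ) → Fin d → ℝ),
      (∀ c, Differentiable ℝ (fun y => Y₁ y c)) → (∀ c, Differentiable ℝ (fun y => η₁ y c)) →
      (∀ c, Differentiable ℝ (fun y => Y₂ y c)) → (∀ c, Differentiable ℝ (fun y => η₂ y c)) →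
      pair (cbr (liftSec Y₁ η₁) (liftSec Y₂ η₂)) (liftSec Y₃ η₃) p
        = 2 * pairC (courant (Y₁, η₁) (Y₂, η₂)) (Y₃, η₃) (xpart p) := by
    intro Y₁ η₁ Y₂ η₂ Y₃ η₃ h1 h1' h2 h2'
    have : pair (cbr (liftSec Y₁ η₁) (liftSec Y₂ η₂)) (liftSec Y₃ η₃) p
        = pair (liftSec (courant (Y₁, η₁) (Y₂, η₂)).1 (courant (Y₁, η₁) (Y₂, η₂)).2)
            (liftSec Y₃ η₃) p := by
      unfold pair
      exact Finset.sum_congr rfl fun A _ => by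
        rw [cbr_lift Y₁ η₁ Y₂ η₂ h1 h1' h2 h2' p A]
    rw [this, pair_lift]
  unfold Nform Nc
  rw [hp X₁ ξ₁ X₂ ξ₂ X₃ ξ₃ (dc X₁ hX₁) (dc ξ₁ hξ₁) (dc X₂ hX₂) (dc ξ₂ hξ₂),
      hp X₂ ξ₂ X₃ ξ₃ X₁ ξ₁ (dc X₂ hX₂) (dc ξ₂ hξ₂) (dc X₃ hX₃) (dc ξ₃ hξ₃),
      hp X₃ ξ₃ X₁ ξ₁ X₂ ξ₂ (dc X₃ hX₃) (dc ξ₃ hξ₃) (dc X₁ hX₁) (dc ξ₁ hξ₁)]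
  ring

end
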